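/- arXiv:2104.13481 — 2 statements merged into one kernel-verified Lean document; each statement's English description precedes it below -/
import Mathlib

section
/- Let A be a semilattice of abelian groups with an S-module structure (α, λ), where α : E(S) → E(A) is an isomorphism and λ : S → end A is a homomorphism satisfying λ_e(a) = α(e)a and λ_s(α(e)) = α(s e s⁻¹). Define β : A → S by β(a) = α⁻¹(a a⁻¹). Then (α, λ, β) is a crossed S-module structure on A; in particular the Peiffer identity λ_{β(a)}(a') = a a' a⁻¹ and equivariance β(λ_s(a)) = s β(a) s⁻¹ hold. -/
/-- An inverse semigroup: every element `s` has a (unique) inverse `s⁻¹`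
with `s * s⁻¹ * s = s` and `s⁻¹ * s * s⁻¹ = s⁻¹`. -/
class InverseSemigroup (S : Type*) extends Semigroup S, Inv S where
  mul_inv_mul : ∀ s : S, s * s⁻¹ * s = s
  inv_mul_inv : ∀ s : S, s⁻¹ * s * s⁻¹ = s⁻¹
  inv_unique : ∀ s t : S, s * t * s = s → t * s * t = t → t = s⁻¹

namespace InverseSemigroup

/-- The set of idempotents of a multiplicative structure. -/
def E (S : Type*) [Mul S] : Set S := {e | e * e = e}

/-- The natural partial order: `s ≤ t` iff `s = s * s⁻¹ * t`. -/
def nle {S : Type*} [Mul S] [Inv S] (s t : S) : Prop := s = s * s⁻¹ * t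

/-- `r s = s * s⁻¹`. -/
def r {S : Type*} [Mul S] [Inv S] (s : S) : S := s * s⁻¹

/-- A Clifford semigroup (semilattice of groups): idempotents are central. -/
def IsClifford (S : Type*) [Mul S] : Prop := ∀ e ∈ E S, ∀ s : S, e * s = s * e

end InverseSemigroup

open InverseSemigroup

/-!
Peiffer identity: `β a` is the idempotent `α⁻¹(a a⁻¹)`, so by (CM1) `λ_{β a}` is multiplication
by `a a⁻¹`, which equals conjugation by `a` because `A` is commutative.

Equivariance: `α` is injective on idempotents and `s (β a) s⁻¹` is idempotent, so it suffices to
compare images under `α`. Since `λ_s` is multiplicative it preserves inverses, whence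
`α (β (λ_s a)) = λ_s (a a⁻¹) = λ_s (α (β a)) = α (s (β a) s⁻¹)` by (CM2).
-/

namespace InverseSemigroup

variable {T : Type*} [InverseSemigroup T]

theorem inv_eq_self_of_mem_E {e : T} (he : e ∈ E T) : e⁻¹ = e :=
  (inv_unique e e (by rw [he, he]) (by rw [he, he])).symm

theorem mul_mem_E {e f : T} (he : e ∈ E T) (hf : f ∈ E T) : e * f ∈ E T := by
  set x := (e * f)⁻¹
  have hx : x * (e * f) * x = x := inv_mul_inv _
  have hx' : e * f * x * (e * f) = e * f := mul_inv_mul _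
  -- `f x e` is also an inverse of `e f`, hence equals `x`
  have hfxe : f * x * e = x := by
    refine inv_unique (e * f) _ ?_ ?_
    · calc e * f * (f * x * e) * (e * f) = e * (f * f) * x * (e * e) * f := by
            simp only [mul_assoc]
        _ = e * f * x * (e * f) := by rw [he, hf]; simp only [mul_assoc]
        _ = e * f := hx'
    · calc f * x * e * (e * f) * (f * x * e) = f * (x * (e * e) * (f * f) * x) * e := by
            simp only [mul_assoc]
        _ = f * x * e := by rw [he, hf, mul_assoc x e f, hx]
  have hxx : x ∈ E T :=
    calc x * x = f * x * e * (f * x * e) := by rw [hfxe]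
      _ = f * (x * (e * f) * x) * e := by simp only [mul_assoc]
      _ = x := by rw [hx, hfxe]
  have hef : e * f = x⁻¹ := inv_unique x (e * f) hx hx'
  rw [hef, inv_eq_self_of_mem_E hxx]
  exact hxx

theorem mul_comm_of_mem_E {e f : T} (he : e ∈ E T) (hf : f ∈ E T) : e * f = f * e := by
  have hfe : f * e = (e * f)⁻¹ := by
    refine inv_unique (e * f) (f * e) ?_ ?_
    · calc e * f * (f * e) * (e * f) = e * (f * f) * (e * e) * f := by simp only [mul_assoc]
        _ = e * f * (e * f) := by rw [he, hf]; simp only [mul_assoc]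
        _ = e * f := mul_mem_E he hf
    · calc f * e * (e * f) * (f * e) = f * (e * e) * (f * f) * e := by simp only [mul_assoc]
        _ = f * e * (f * e) := by rw [he, hf]; simp only [mul_assoc]
        _ = f * e := mul_mem_E hf he
  rw [hfe, inv_eq_self_of_mem_E (mul_mem_E he hf)]

theorem inv_mul_self_mem_E (s : T) : s⁻¹ * s ∈ E T := by
  show s⁻¹ * s * (s⁻¹ * s) = s⁻¹ * s
  rw [← mul_assoc, inv_mul_inv]

theorem mul_mul_inv_mem_E (s : T) {e : T} (he : e ∈ E T) : s * e * s⁻¹ ∈ E T :=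
  calc s * e * s⁻¹ * (s * e * s⁻¹) = s * (e * (s⁻¹ * s)) * e * s⁻¹ := by simp only [mul_assoc]
    _ = s * s⁻¹ * s * (e * e) * s⁻¹ := by
        rw [mul_comm_of_mem_E he (inv_mul_self_mem_E s)]; simp only [mul_assoc]
    _ = s * e * s⁻¹ := by rw [mul_inv_mul, he]

theorem map_inv_of_map_mul {U : Type*} [InverseSemigroup U] {f : T → U}
    (hf : ∀ a b, f (a * b) = f a * f b) (a : T) : f a⁻¹ = (f a)⁻¹ :=
  inv_unique (f a) (f a⁻¹) (by rw [← hf, ← hf, mul_inv_mul]) (by rw [← hf, ← hf, inv_mul_inv])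

end InverseSemigroup

theorem module_is_crossed_module_general {S A : Type*} [InverseSemigroup S] [InverseSemigroup A]
    (hAcomm : ∀ a b : A, a * b = b * a)
    (α : S → A)
    (hαinj : ∀ e ∈ E S, ∀ f ∈ E S, α e = α f → e = f)
    (lam : S → A → A)
    (hlammul : ∀ s : S, ∀ a b : A, lam s (a * b) = lam s a * lam s b)
    (hCM1 : ∀ e ∈ E S, ∀ a : A, lam e a = α e * a)
    (hCM2 : ∀ s : S, ∀ e ∈ E S, lam s (α e) = α (s * e * s⁻¹))
    (β : A → S)
    (hβE : ∀ a : A, β a ∈ E S)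
    (hβdef : ∀ a : A, α (β a) = a * a⁻¹) :
    (∀ a a' : A, lam (β a) a' = a * a' * a⁻¹) ∧
    (∀ s : S, ∀ a : A, β (lam s a) = s * β a * s⁻¹) := by
  refine ⟨fun a a' => ?_, fun s a => ?_⟩
  · rw [hCM1 _ (hβE a), hβdef, mul_assoc, hAcomm a⁻¹, ← mul_assoc]
  · refine hαinj _ (hβE _) _ (mul_mul_inv_mem_E s (hβE a)) ?_
    calc α (β (lam s a)) = lam s a * (lam s a)⁻¹ := hβdef _
      _ = lam s (α (β a)) := by rw [hβdef, hlammul, map_inv_of_map_mul (hlammul s)]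
      _ = α (s * β a * s⁻¹) := hCM2 s _ (hβE a)

/-- An `S`-module structure `(α, λ)` on a semilattice of abelian groups `A`, together
with `β(a) = α⁻¹(a a⁻¹)`, is a crossed `S`-module: the Peiffer identity and the
equivariance of `β` hold. -/
theorem module_is_crossed_module {S A : Type*} [InverseSemigroup S] [InverseSemigroup A]
    (hAcomm : ∀ a b : A, a * b = b * a)
    (α : S → A)
    (hαmap : ∀ e ∈ E S, α e ∈ E A)
    (hαinj : ∀ e ∈ E S, ∀ f ∈ E S, α e = α f → e = f)
    (hαsurj : ∀ a ∈ E A, ∃ e ∈ E S, α e = a)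
    (hαmul : ∀ e ∈ E S, ∀ f ∈ E S, α (e * f) = α e * α f)
    (lam : S → A → A)
    (hlamhom : ∀ s t : S, ∀ a : A, lam (s * t) a = lam s (lam t a))
    (hlammul : ∀ s : S, ∀ a b : A, lam s (a * b) = lam s a * lam s b)
    (hCM1 : ∀ e ∈ E S, ∀ a : A, lam e a = α e * a)
    (hCM2 : ∀ s : S, ∀ e ∈ E S, lam s (α e) = α (s * e * s⁻¹))
    (β : A → S)
    (hβE : ∀ a : A, β a ∈ E S)
    (hβdef : ∀ a : A, α (β a) = a * a⁻¹) :
    (∀ a a' : A, lam (β a) a' = a * a' * a⁻¹) ∧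
    (∀ s : S, ∀ a : A, β (lam s a) = s * β a * s⁻¹) :=
  module_is_crossed_module_general hAcomm α hαinj lam hlammul hCM1 hCM2 β hβE hβdef
end

section
/- Let c ∈ Z³_≤(T¹, A¹) be an order-preserving 3-cocycle. Then c is normalized if and only if c(t, e, e) = θ(t e t⁻¹) and c(e, e, t) = θ(e t t⁻¹) for all t ∈ T and e ∈ E(T). -/
namespace InverseSemigroup

variable {S : Type*} [InverseSemigroup S]

protected lemma inv_inv (s : S) : s⁻¹⁻¹ = s :=
  (inv_unique s⁻¹ s (inv_mul_inv s) (mul_inv_mul s)).symm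

lemma inv_eq_self_of_isIdempotentElem {e : S} (he : IsIdempotentElem e) : e⁻¹ = e :=
  (inv_unique e e (by rw [he.eq, he.eq]) (by rw [he.eq, he.eq])).symm

lemma isIdempotentElem_mul_inv (s : S) : IsIdempotentElem (s * s⁻¹) := by
  rw [IsIdempotentElem, ← mul_assoc, mul_inv_mul]

lemma isIdempotentElem_inv_mul (s : S) : IsIdempotentElem (s⁻¹ * s) := by
  rw [IsIdempotentElem, ← mul_assoc, inv_mul_inv]

lemma isIdempotentElem_r (s : S) : IsIdempotentElem (r s) := isIdempotentElem_mul_inv s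

lemma isIdempotentElem_mul {e f : S} (he : IsIdempotentElem e) (hf : IsIdempotentElem f) :
    IsIdempotentElem (e * f) := by
  -- `f (ef)⁻¹ e` is another inverse of `ef`, hence equals `(ef)⁻¹`, which is therefore idempotent.
  have hfae : f * (e * f)⁻¹ * e = (e * f)⁻¹ := by
    refine inv_unique (e * f) (f * (e * f)⁻¹ * e) ?_ ?_
    · calc e * f * (f * (e * f)⁻¹ * e) * (e * f) = e * (f * f) * (e * f)⁻¹ * ((e * e) * f) := by
            simp only [mul_assoc]
        _ = e * f := by rw [he.eq, hf.eq, mul_inv_mul]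
    · calc f * (e * f)⁻¹ * e * (e * f) * (f * (e * f)⁻¹ * e)
            = f * ((e * f)⁻¹ * ((e * e) * (f * f)) * (e * f)⁻¹) * e := by simp only [mul_assoc]
        _ = f * (e * f)⁻¹ * e := by rw [he.eq, hf.eq, inv_mul_inv, mul_assoc]
  have hinv : IsIdempotentElem (e * f)⁻¹ := by
    calc (e * f)⁻¹ * (e * f)⁻¹ = f * ((e * f)⁻¹ * (e * f) * (e * f)⁻¹) * e := by
          conv_lhs => rw [← hfae]
          simp only [mul_assoc]
      _ = (e * f)⁻¹ := by rw [inv_mul_inv, hfae]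
  rw [← InverseSemigroup.inv_inv (e * f), inv_eq_self_of_isIdempotentElem hinv]
  exact hinv

lemma commute_of_isIdempotentElem {e f : S} (he : IsIdempotentElem e)
    (hf : IsIdempotentElem f) : Commute e f := by
  have hfe : f * e = (e * f)⁻¹ := by
    refine inv_unique (e * f) (f * e) ?_ ?_
    · calc e * f * (f * e) * (e * f) = e * (f * f) * ((e * e) * f) := by simp only [mul_assoc]
        _ = e * f := by rw [he.eq, hf.eq, (isIdempotentElem_mul he hf).eq]
    · calc f * e * (e * f) * (f * e) = f * (e * e) * ((f * f) * e) := by simp only [mul_assoc]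
        _ = f * e := by rw [he.eq, hf.eq, (isIdempotentElem_mul hf he).eq]
  rw [Commute, SemiconjBy, hfe, inv_eq_self_of_isIdempotentElem (isIdempotentElem_mul he hf)]

protected lemma mul_inv_rev (s t : S) : (s * t)⁻¹ = t⁻¹ * s⁻¹ := by
  have hcomm : (t * t⁻¹) * (s⁻¹ * s) = (s⁻¹ * s) * (t * t⁻¹) :=
    commute_of_isIdempotentElem (isIdempotentElem_mul_inv t) (isIdempotentElem_inv_mul s)
  refine (inv_unique (s * t) (t⁻¹ * s⁻¹) ?_ ?_).symm
  · calc s * t * (t⁻¹ * s⁻¹) * (s * t) = s * ((t * t⁻¹) * (s⁻¹ * s)) * t := by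
          simp only [mul_assoc]
      _ = (s * s⁻¹ * s) * (t * t⁻¹ * t) := by rw [hcomm]; simp only [mul_assoc]
      _ = s * t := by rw [mul_inv_mul, mul_inv_mul]
  · calc t⁻¹ * s⁻¹ * (s * t) * (t⁻¹ * s⁻¹) = t⁻¹ * ((s⁻¹ * s) * (t * t⁻¹)) * s⁻¹ := by
          simp only [mul_assoc]
      _ = (t⁻¹ * t * t⁻¹) * (s⁻¹ * s * s⁻¹) := by rw [← hcomm]; simp only [mul_assoc]
      _ = t⁻¹ * s⁻¹ := by rw [inv_mul_inv, inv_mul_inv]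

lemma r_mul (s t : S) : r (s * t) = s * r t * s⁻¹ := by
  rw [r, r, InverseSemigroup.mul_inv_rev]
  simp only [mul_assoc]

lemma r_idem_mul {e : S} (he : IsIdempotentElem e) (t : S) : r (e * t) = e * r t := by
  rw [r_mul, inv_eq_self_of_isIdempotentElem he, mul_assoc,
    ← (commute_of_isIdempotentElem he (isIdempotentElem_r t)).eq, ← mul_assoc, he.eq]

lemma r_mul_idem {e : S} (he : IsIdempotentElem e) (t : S) : r (t * e) = t * e * t⁻¹ := by
  rw [r_mul, r, inv_eq_self_of_isIdempotentElem he, he.eq]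

lemma r_mul_r_mul (s t : S) : r s * r (s * t) = r (s * t) := by
  rw [r_mul, r]
  simp only [← mul_assoc]
  rw [mul_inv_mul]

lemma nle_refl (s : S) : nle s s := (mul_inv_mul s).symm

lemma nle_idem_mul {e : S} (he : IsIdempotentElem e) (s : S) : nle (e * s) s := by
  rw [nle, ← r, r_idem_mul he, r, mul_assoc, mul_inv_mul]

lemma nle_mul_idem {e : S} (he : IsIdempotentElem e) (s : S) : nle (s * e) s := by
  rw [nle, ← r, r_mul_idem he]
  calc s * e = s * s⁻¹ * s * e := by rw [mul_inv_mul]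
    _ = s * ((s⁻¹ * s) * e) := by simp only [mul_assoc]
    _ = s * e * s⁻¹ * s := by
      rw [← (commute_of_isIdempotentElem he (isIdempotentElem_inv_mul s)).eq]
      simp only [mul_assoc]

lemma eq_of_nle_of_r_eq {s t : S} (h : nle s t) (hr : r s = r t) : s = t := by
  rw [h, ← r, hr, r, mul_inv_mul]

end InverseSemigroup

open InverseSemigroup

section Cocycle

variable {T A : Type*} [InverseSemigroup T] [InverseSemigroup A]

-- The paper's `c(x, y, z) ∈ A_{θ(r(xyz))}`; for commutative `A` the condition on `r` suffices.
def LiesOverR (θ : T → A) (c : T → T → T → A) : Prop :=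
  ∀ x y z : T, r (c x y z) = θ (r (x * y * z))

def IsThreeCocycle (η : T → A → A) (c : T → T → T → A) : Prop :=
  ∀ x y z w : T, η x (c y z w) * c x y z * c x (y * z) w = c x y (z * w) * c (x * y) z w

def IsOrderPreserving (c : T → T → T → A) : Prop :=
  ∀ x x' y y' z z' : T, nle x x' → nle y y' → nle z z' → nle (c x y z) (c x' y' z')

variable {θ : T → A} {η : T → A → A} {c : T → T → T → A}

lemma LiesOverR.theta_r_mul (hc : LiesOverR θ c) (x y z : T) :
    θ (r (x * y * z)) * c x y z = c x y z := by
  rw [← hc x y z, r, mul_inv_mul]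

lemma LiesOverR.theta_mul_of_mul_r_eq (hc : LiesOverR θ c)
    (hθmul : ∀ e ∈ E T, ∀ f ∈ E T, θ (e * f) = θ e * θ f) {u x y z : T}
    (hu : IsIdempotentElem u) (h : u * r (x * y * z) = r (x * y * z)) :
    θ u * c x y z = c x y z := by
  rw [← hc.theta_r_mul, ← mul_assoc, ← hθmul u hu _ (isIdempotentElem_r _), h]

lemma LiesOverR.eq_of_isIdempotentElem (hc : LiesOverR θ c) {x y z : T}
    (h : IsIdempotentElem (c x y z)) : c x y z = θ (r (x * y * z)) := by
  rw [← hc x y z, r, inv_eq_self_of_isIdempotentElem h, h.eq]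

lemma IsOrderPreserving.eq_of_nle_of_mul_eq (hop : IsOrderPreserving c) (hc : LiesOverR θ c)
    {x x' y y' z z' : T} (hx : nle x x') (hy : nle y y') (hz : nle z z')
    (h : x * y * z = x' * y' * z') : c x y z = c x' y' z' :=
  eq_of_nle_of_r_eq (hop x x' y y' z z' hx hy hz) (by rw [hc, hc, h])

lemma eq_theta_r_of_isIdempotentElem_fst
    (hθmul : ∀ e ∈ E T, ∀ f ∈ E T, θ (e * f) = θ e * θ f)
    (hη1 : ∀ e ∈ E T, ∀ a : A, η e a = θ e * a)
    (hc : LiesOverR θ c) (hcoc : IsThreeCocycle η c) (hop : IsOrderPreserving c)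
    (hdiag : ∀ t : T, ∀ e ∈ E T, c e e t = θ (e * r t))
    {e : T} (he : IsIdempotentElem e) (x y : T) : c e x y = θ (r (e * x * y)) := by
  have hmid : c e (e * x) y = c e x y :=
    hop.eq_of_nle_of_mul_eq hc (nle_refl e) (nle_idem_mul he x) (nle_refl y)
      (by rw [← mul_assoc e e x, he.eq])
  have hrexy : e * r (x * y) = r (e * x * y) := by rw [mul_assoc, r_idem_mul he]
  have hθe : θ e * c e x y = c e x y :=
    hc.theta_mul_of_mul_r_eq hθmul he (by rw [← hrexy, ← mul_assoc, he.eq])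
  have hθrex : θ (r (e * x)) * c e x y = c e x y :=
    hc.theta_mul_of_mul_r_eq hθmul (isIdempotentElem_r _) (r_mul_r_mul (e * x) y)
  have hcoc' := hcoc e e x y
  rw [hη1 e he, hθe, hdiag x e he, ← r_idem_mul he, hmid, hdiag (x * y) e he, hrexy, he.eq,
    hc.theta_r_mul] at hcoc'
  refine hc.eq_of_isIdempotentElem ?_
  calc c e x y * c e x y = c e x y * θ (r (e * x)) * c e x y := by rw [mul_assoc, hθrex]
    _ = c e x y := hcoc'

lemma eq_theta_r_of_isIdempotentElem_snd
    (hθmul : ∀ e ∈ E T, ∀ f ∈ E T, θ (e * f) = θ e * θ f)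
    (hη2 : ∀ t : T, ∀ e ∈ E T, η t (θ e) = θ (t * e * t⁻¹))
    (hc : LiesOverR θ c) (hcoc : IsThreeCocycle η c) (hop : IsOrderPreserving c)
    (hdiagL : ∀ t : T, ∀ e ∈ E T, c e e t = θ (e * r t))
    (hdiagR : ∀ t : T, ∀ e ∈ E T, c t e e = θ (t * e * t⁻¹))
    {e : T} (he : IsIdempotentElem e) (x y : T) : c x e y = θ (r (x * e * y)) := by
  have hrxey : r (x * e * y) = x * (e * r y) * x⁻¹ := by rw [mul_assoc, r_mul, r_idem_mul he]
  have hright : c x e (e * y) = c x e y :=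
    hop.eq_of_nle_of_mul_eq hc (nle_refl x) (nle_refl e) (nle_idem_mul he y)
      (by rw [← mul_assoc, mul_assoc x e e, he.eq])
  have hleft : c (x * e) e y = c x e y :=
    hop.eq_of_nle_of_mul_eq hc (nle_mul_idem he x) (nle_refl e) (nle_refl y)
      (by rw [mul_assoc x e e, he.eq])
  have hcoc' := hcoc x e e y
  rw [hdiagL y e he, hη2 x _ (isIdempotentElem_mul he (isIdempotentElem_r y)), ← hrxey,
    hdiagR x e he, ← r_mul_idem he, he.eq, hright, hleft] at hcoc'
  refine hc.eq_of_isIdempotentElem ?_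
  calc c x e y * c x e y = θ (r (x * e * y)) * θ (r (x * e)) * c x e y := hcoc'.symm
    _ = c x e y := by
      rw [mul_assoc, hc.theta_mul_of_mul_r_eq hθmul (isIdempotentElem_r _) (r_mul_r_mul _ _),
        hc.theta_r_mul]

lemma eq_theta_r_of_isIdempotentElem_thd (hA : ∀ a b : A, a * b = b * a)
    (hη2 : ∀ t : T, ∀ e ∈ E T, η t (θ e) = θ (t * e * t⁻¹))
    (hc : LiesOverR θ c) (hcoc : IsThreeCocycle η c) (hop : IsOrderPreserving c)
    (hdiagR : ∀ t : T, ∀ e ∈ E T, c t e e = θ (t * e * t⁻¹))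
    {e : T} (he : IsIdempotentElem e) (x y : T) : c x y e = θ (r (x * y * e)) := by
  have hmid : c x (y * e) e = c x y e :=
    hop.eq_of_nle_of_mul_eq hc (nle_refl x) (nle_mul_idem he y) (nle_refl e)
      (by rw [← mul_assoc x y e, mul_assoc (x * y) e e, he.eq])
  have hcoc' := hcoc x y e e
  rw [hdiagR y e he, ← r_mul_idem he, hη2 x _ (isIdempotentElem_r _), ← r_mul,
    ← mul_assoc x y e, hmid, he.eq, hdiagR (x * y) e he, ← r_mul_idem he, hc.theta_r_mul] at hcoc'
  refine hc.eq_of_isIdempotentElem ?_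
  calc c x y e * c x y e = c x y e * θ (r (x * y * e)) := hcoc'
    _ = c x y e := by rw [hA, hc.theta_r_mul]

end Cocycle

theorem normalized_iff_two_conditions_general {T A : Type*} [InverseSemigroup T] [InverseSemigroup A]
    (θ : T → A) (η : T → A → A)
    (hAcomm : ∀ a b : A, a * b = b * a)
    (hθmul : ∀ e ∈ E T, ∀ f ∈ E T, θ (e * f) = θ e * θ f)
    (hη1 : ∀ e ∈ E T, ∀ a : A, η e a = θ e * a)
    (hη2 : ∀ t : T, ∀ e ∈ E T, η t (θ e) = θ (t * e * t⁻¹))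
    (c : T → T → T → A)
    (hc : ∀ x y z : T, c x y z * (c x y z)⁻¹ = θ (r (x * y * z)))
    (hcoc : ∀ x y z w : T,
      η x (c y z w) * c x y z * c x (y * z) w = c x y (z * w) * c (x * y) z w)
    (hop : ∀ x x' y y' z z' : T, nle x x' → nle y y' → nle z z' →
      nle (c x y z) (c x' y' z'))
    : (∀ x y : T, ∀ e ∈ E T,
        c e (e * x) y = θ (r (e * x * y)) ∧
        c (x * e) e (e * y) = θ (r (x * e * y)) ∧
        c x (y * e) e = θ (r (x * y * e))) ↔
      (∀ t : T, ∀ e ∈ E T,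
        c t e e = θ (t * e * t⁻¹) ∧ c e e t = θ (e * (t * t⁻¹))) := by
  constructor
  · intro hnorm t e he
    have he' : IsIdempotentElem e := he
    constructor
    · have h := (hnorm t e e he).2.2
      rwa [he'.eq, mul_assoc t e e, he'.eq, r_mul_idem he'] at h
    · have h := (hnorm e t e he).1
      rwa [he'.eq, r_idem_mul he'] at h
  · intro hdiag x y e he
    have he' : IsIdempotentElem e := he
    have hdiagL : ∀ t : T, ∀ e ∈ E T, c e e t = θ (e * r t) := fun t e he => (hdiag t e he).2
    have hdiagR : ∀ t : T, ∀ e ∈ E T, c t e e = θ (t * e * t⁻¹) := fun t e he => (hdiag t e he).1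
    have hee : ∀ z : T, e * (e * z) = e * z := fun z => by rw [← mul_assoc, he'.eq]
    refine ⟨?_, ?_, ?_⟩
    · rw [eq_theta_r_of_isIdempotentElem_fst hθmul hη1 hc hcoc hop hdiagL he']
      simp only [mul_assoc, hee]
    · rw [eq_theta_r_of_isIdempotentElem_snd hθmul hη2 hc hcoc hop hdiagL hdiagR he']
      simp only [mul_assoc, hee]
    · rw [eq_theta_r_of_isIdempotentElem_thd hAcomm hη2 hc hcoc hop hdiagR he']
      simp only [mul_assoc, he'.eq]

/-- An order-preserving 3-cocycle is normalized iff `c(t,e,e) = θ(t e t⁻¹)` and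
`c(e,e,t) = θ(e t t⁻¹)` for all `t` and idempotents `e`. -/
theorem normalized_iff_two_conditions {T A : Type*} [InverseSemigroup T] [InverseSemigroup A]
    (θ : T → A) (η : T → A → A)
    (hAcomm : ∀ a b : A, a * b = b * a)
    (hθE : ∀ e ∈ E T, θ e ∈ E A)
    (hθinj : ∀ e ∈ E T, ∀ f ∈ E T, θ e = θ f → e = f)
    (hθsurj : ∀ a ∈ E A, ∃ e ∈ E T, θ e = a)
    (hθmul : ∀ e ∈ E T, ∀ f ∈ E T, θ (e * f) = θ e * θ f)
    (hηhom : ∀ t u : T, ∀ a : A, η (t * u) a = η t (η u a))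
    (hηmul : ∀ t : T, ∀ a b : A, η t (a * b) = η t a * η t b)
    (hη1 : ∀ e ∈ E T, ∀ a : A, η e a = θ e * a)
    (hη2 : ∀ t : T, ∀ e ∈ E T, η t (θ e) = θ (t * e * t⁻¹))
    (c : T → T → T → A)
    (hc : ∀ x y z : T, c x y z * (c x y z)⁻¹ = θ (r (x * y * z)))
    (hcoc : ∀ x y z w : T,
      η x (c y z w) * c x y z * c x (y * z) w = c x y (z * w) * c (x * y) z w)
    (hop : ∀ x x' y y' z z' : T, nle x x' → nle y y' → nle z z' →
      nle (c x y z) (c x' y' z'))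
    : (∀ x y : T, ∀ e ∈ E T,
        c e (e * x) y = θ (r (e * x * y)) ∧
        c (x * e) e (e * y) = θ (r (x * e * y)) ∧
        c x (y * e) e = θ (r (x * y * e))) ↔
      (∀ t : T, ∀ e ∈ E T,
        c t e e = θ (t * e * t⁻¹) ∧ c e e t = θ (e * (t * t⁻¹))) :=
  normalized_iff_two_conditions_general θ η hAcomm hθmul hη1 hη2 c hc hcoc hop
end
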